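/- arXiv:2307.09849 — 3 statements merged into one kernel-verified Lean document; each statement's English description precedes it below -/
import Mathlib

section
/- Let A be a complex Banach *-algebra with identity and let a ∈ A. Then a is *-DMP if and only if a has a pseudo core inverse a^ⓓ and a^ⓓ = a^D (the Drazin inverse of a). -/
/-!
A group inverse `x` of `b` commutes with everything that commutes with `b`, so a common
Moore–Penrose and group inverse `x` of `a ^ (n + 1)` commutes with `a`, and `a ^ n * x` is then a
Drazin inverse of `a` whose idempotent `a * (a ^ n * x) = a ^ (n + 1) * x` is self-adjoint.
Conversely, a Drazin inverse `x` of index `k` makes `x ^ (k + 1)` the group inverse of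
`a ^ (k + 1)`, with the same idempotent `a ^ (k + 1) * x ^ (k + 1) = a * x`; self-adjointness of
that idempotent is exactly what makes a group inverse a Moore–Penrose inverse.
-/

/-- Moore–Penrose inverse. -/
def IsMP {A : Type*} [Ring A] [StarRing A] (a x : A) : Prop :=
  a * x * a = a ∧ x * a * x = x ∧ star (a * x) = a * x ∧ star (x * a) = x * a

/-- Group inverse. -/
def IsGroupInv {A : Type*} [Ring A] (a x : A) : Prop :=
  a * x * a = a ∧ x * a * x = x ∧ a * x = x * a

/-- `a` is *-DMP: some power `a ^ n` (`n ≥ 1`) has a common Moore–Penrose and group inverse. -/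
def IsStarDMP {A : Type*} [Ring A] [StarRing A] (a : A) : Prop :=
  ∃ n : ℕ, 1 ≤ n ∧ ∃ x : A, IsMP (a ^ n) x ∧ IsGroupInv (a ^ n) x

/-- `x` is the Drazin inverse of `a` (with some index `k`). -/
def IsDrazin {A : Type*} [Ring A] (a x : A) : Prop :=
  ∃ k : ℕ, x * a ^ (k + 1) = a ^ k ∧ a * x ^ 2 = x ∧ a * x = x * a

/-- `x` is the pseudo core inverse of `a`. -/
def IsPCore {A : Type*} [Ring A] [StarRing A] (a x : A) : Prop :=
  ∃ k : ℕ, x * a ^ (k + 1) = a ^ k ∧ a * x ^ 2 = x ∧ star (a * x) = a * x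

/-- EP element: common group and Moore–Penrose inverse. -/
def IsEP {A : Type*} [Ring A] [StarRing A] (a : A) : Prop :=
  ∃ x : A, IsMP a x ∧ IsGroupInv a x

namespace IsGroupInv

variable {R : Type*} [Ring R] {b x : R}

theorem isMP [StarRing R] (h : IsGroupInv b x) (hs : IsSelfAdjoint (b * x)) : IsMP b x :=
  ⟨h.1, h.2.1, hs, h.2.2 ▸ hs⟩

/-- The idempotent `b * x` commutes with every `c` commuting with `b`, and hence so does
`x = (b * x) * x = x * (b * x)`. -/
theorem commute_of_commute {c : R} (h : IsGroupInv b x) (hc : Commute c b) : Commute c x := by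
  obtain ⟨hbxb, hxbx, hbx⟩ := h
  have hce : c * (b * x) = b * x * c := by
    calc c * (b * x) = b * x * b * c * x := by rw [hbxb, ← mul_assoc, hc.eq]
      _ = b * x * (c * (b * x)) := by simp only [mul_assoc, ← hc.eq]
      _ = x * (b * c) * (x * b) := by rw [hbx]; simp only [mul_assoc]
      _ = x * c * (b * x * b) := by rw [← hc.eq]; simp only [mul_assoc]
      _ = b * x * c := by rw [hbxb, mul_assoc, hc.eq, ← mul_assoc, hbx]
  calc c * x = c * (b * x) * x := by rw [mul_assoc, hbx, hxbx]
    _ = b * x * (c * x) := by rw [hce, mul_assoc]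
    _ = x * (c * (b * x)) := by rw [← mul_assoc c b x, hc.eq, hbx]; simp only [mul_assoc]
    _ = x * c := by rw [hce, ← mul_assoc, ← mul_assoc, hxbx]

theorem drazin_eqns_pow_mul {a : R} {n : ℕ} (h : IsGroupInv (a ^ (n + 1)) x) :
    a ^ n * x * a ^ (n + 1 + 1) = a ^ (n + 1) ∧ a * (a ^ n * x) ^ 2 = a ^ n * x ∧
      a * (a ^ n * x) = a ^ n * x * a := by
  have hax : Commute a x := h.commute_of_commute (Commute.self_pow a (n + 1))
  have hay : a * (a ^ n * x) = a ^ n * x * a := ((Commute.self_pow a n).mul_right hax).eq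
  refine ⟨?_, ?_, hay⟩
  · calc a ^ n * x * a ^ (n + 1 + 1) = a * (a ^ n * x) * a ^ (n + 1) := by
          rw [hay, pow_succ' a (n + 1), mul_assoc _ a]
      _ = a ^ (n + 1) := by rw [← mul_assoc, ← pow_succ', h.1]
  · calc a * (a ^ n * x) ^ 2 = a ^ n * (x * a ^ (n + 1) * x) := by
          rw [sq, ← mul_assoc, hay, pow_succ']; simp only [mul_assoc]
      _ = a ^ n * x := by rw [h.2.1]

end IsGroupInv

section Drazin

variable {R : Type*} [Ring R] {a x : R}

theorem pow_succ_mul_pow_succ_of_drazin (h2 : a * x ^ 2 = x) (hc : Commute a x) (k : ℕ) :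
    a ^ (k + 1) * x ^ (k + 1) = a * x := by
  have hidem : IsIdempotentElem (a * x) := by
    rw [IsIdempotentElem, mul_assoc, ← mul_assoc x, ← hc.eq, mul_assoc, ← sq, h2]
  rw [← hc.mul_pow, hidem.pow_succ_eq]

theorem isGroupInv_pow_succ_of_drazin {k : ℕ} (h1 : x * a ^ (k + 1) = a ^ k)
    (h2 : a * x ^ 2 = x) (hc : Commute a x) : IsGroupInv (a ^ (k + 1)) (x ^ (k + 1)) := by
  have hax := pow_succ_mul_pow_succ_of_drazin h2 hc k
  refine ⟨?_, ?_, (hc.pow_pow _ _).eq⟩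
  · rw [hax, mul_assoc, h1, ← pow_succ']
  · rw [mul_assoc, hax, pow_succ, mul_assoc, ← mul_assoc x, ← hc.eq, mul_assoc, ← sq, h2]

end Drazin

variable {A : Type*} [NormedRing A] [StarRing A] [NormedAlgebra ℂ A] [CompleteSpace A]

theorem stmt1 (a : A) :
    IsStarDMP a ↔ ∃ x : A, IsPCore a x ∧ IsDrazin a x := by
  constructor
  · rintro ⟨n, hn, x, hmp, hg⟩
    obtain ⟨n, rfl⟩ := Nat.exists_eq_add_of_le' hn
    obtain ⟨h1, h2, hcomm⟩ := hg.drazin_eqns_pow_mul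
    have hs : star (a * (a ^ n * x)) = a * (a ^ n * x) := by
      rw [← mul_assoc, ← pow_succ']; exact hmp.2.2.1
    exact ⟨a ^ n * x, ⟨n + 1, h1, h2, hs⟩, ⟨n + 1, h1, h2, hcomm⟩⟩
  · rintro ⟨x, ⟨-, -, -, hs⟩, ⟨k, h1, h2, hc⟩⟩
    have hg := isGroupInv_pow_succ_of_drazin h1 h2 hc
    refine ⟨k + 1, k.succ_pos, x ^ (k + 1), hg.isMP ?_, hg⟩
    rw [pow_succ_mul_pow_succ_of_drazin h2 hc]
    exact hs
end

section
/- Let A be a complex Banach *-algebra with identity, and let a, b ∈ A be *-DMP elements such that ab = ba and a* b = b a*. Then a + b is *-DMP if and only if 1 + a^D b is *-DMP, where a^D denotes the Drazin inverse of a. -/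
open scoped IsMulCommutative

section CommRing

variable {R : Type*} [CommRing R] {a b d e s t x y : R}

theorem isIdempotentElem_mul_of_mul_sq_eq (h : a * x ^ 2 = x) : IsIdempotentElem (a * x) := by
  unfold IsIdempotentElem
  linear_combination a * h

theorem isDrazin_iff_isNilpotent :
    IsDrazin a x ↔ a * x ^ 2 = x ∧ IsNilpotent (a * (1 - a * x)) := by
  have hq (h : a * x ^ 2 = x) (k : ℕ) :
      (a * (1 - a * x)) ^ (k + 1) = a ^ (k + 1) * (1 - a * x) := by
    rw [mul_pow, (isIdempotentElem_mul_of_mul_sq_eq h).one_sub.pow_succ_eq]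
  constructor
  · rintro ⟨k, h1, h2, -⟩
    refine ⟨h2, k + 1, ?_⟩
    rw [hq h2]
    linear_combination (-a) * h1
  · rintro ⟨h2, k, hk⟩
    refine ⟨k + 1, ?_, h2, mul_comm a x⟩
    have := hq h2 k ▸ pow_eq_zero_of_le k.le_succ hk
    linear_combination -this

theorem IsDrazin.unique (hx : IsDrazin a x) (hy : IsDrazin a y) : x = y := by
  rw [isDrazin_iff_isNilpotent] at hx hy
  obtain ⟨hx2, hxn⟩ := hx
  obtain ⟨hy2, hyn⟩ := hy
  have hp := isIdempotentElem_mul_of_mul_sq_eq hx2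
  have hq := isIdempotentElem_mul_of_mul_sq_eq hy2
  have hpq : a * x * (1 - a * y) = 0 := (hp.mul hq.one_sub).eq_zero_of_isNilpotent <| by
    convert (Commute.all x _).isNilpotent_mul_left hyn using 1; ring
  have hqp : a * y * (1 - a * x) = 0 := (hq.mul hp.one_sub).eq_zero_of_isNilpotent <| by
    convert (Commute.all y _).isNilpotent_mul_left hxn using 1; ring
  linear_combination (-1 : R) * hx2 + hy2 + (x + y) * (hpq - hqp)

theorem IsDrazin.exists_isDrazin_one_add_mul (hd : IsDrazin a d) (hs : IsDrazin (a + b) s) :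
    ∃ t, IsDrazin (1 + d * b) t ∧ (1 + d * b) * t = (a + b) * s * (a * d) + (1 - a * d) := by
  rw [isDrazin_iff_isNilpotent] at hd hs
  obtain ⟨hd2, -⟩ := hd
  obtain ⟨hs2, hsn⟩ := hs
  have hct : (1 + d * b) * (1 - a * d + a * s * (a * d))
      = (a + b) * s * (a * d) + (1 - a * d) := by
    linear_combination (a * b * s - b) * hd2
  refine ⟨_, isDrazin_iff_isNilpotent.2 ⟨?_, ?_⟩, hct⟩
  · rw [sq, ← mul_assoc, hct]
    linear_combination (a - (a + b) * s * a) * hd2 + a * (a * d) ^ 2 * hs2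
  · have : (1 + d * b) * (1 - (1 + d * b) * (1 - a * d + a * s * (a * d)))
        = (d * (a * d)) * ((a + b) * (1 - (a + b) * s)) := by
      linear_combination (-(1 + d * b)) * hct + (-a * (1 - (a + b) * s)) * hd2
    rw [this]
    exact (Commute.all _ _).isNilpotent_mul_left hsn

theorem IsDrazin.exists_isDrazin_add (hd : IsDrazin a d) (he : IsDrazin b e)
    (ht : IsDrazin (1 + d * b) t) :
    ∃ y, IsDrazin (a + b) y ∧ (a + b) * y = (1 + d * b) * t * (a * d) + b * e * (1 - a * d) := by
  rw [isDrazin_iff_isNilpotent] at hd he ht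
  obtain ⟨hd2, han⟩ := hd
  obtain ⟨he2, hbn⟩ := he
  obtain ⟨ht2, hcn⟩ := ht
  -- `(a + b) * e = b * e * (1 + e * a)`, and `1 + e * a` is a unit on the range of `1 - a * d`,
  -- where `a` is nilpotent.
  obtain ⟨u, hu⟩ := ((Commute.all e _).isNilpotent_mul_left han).isUnit_one_add
  have hw : (1 + e * (a * (1 - a * d))) * ↑u⁻¹ = 1 := hu ▸ u.mul_inv
  set w : R := ↑u⁻¹
  set y := t * d * (a * d) + e * (1 - a * d) * w
  have hxy : (a + b) * y = (1 + d * b) * t * (a * d) + b * e * (1 - a * d) := by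
    linear_combination (t * a - a ^ 2 * e * w) * hd2 + b * e * (1 - a * d) * hw
      - a * (1 - a * d) ^ 2 * w * he2
  refine ⟨y, isDrazin_iff_isNilpotent.2 ⟨?_, ?_⟩, hxy⟩
  · linear_combination y * hxy + d * (a * d) ^ 2 * ht2 + (1 - a * d) ^ 2 * w * he2
      + (t * d * a - (1 + d * b) * t * e * w * a - b * e * t * d * a + e * w * a) * hd2
  · have : (a + b) * (1 - (a + b) * y) = (a * (a * d)) * ((1 + d * b) * (1 - (1 + d * b) * t))
        + (1 - b * e) * (a * (1 - a * d)) + (1 - a * d) * (b * (1 - b * e)) := by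
      linear_combination (-(a + b)) * hxy + (-a * b * (1 - (1 + d * b) * t)) * hd2
    rw [this]
    exact (Commute.all _ _).isNilpotent_add
      ((Commute.all _ _).isNilpotent_add ((Commute.all _ _).isNilpotent_mul_left hcn)
        ((Commute.all _ _).isNilpotent_mul_left han))
      ((Commute.all _ _).isNilpotent_mul_left hbn)

theorem IsDrazin.pow_mul_of_pow_succ {n : ℕ} (h : IsDrazin (a ^ (n + 1)) x) :
    IsDrazin a (a ^ n * x) := by
  obtain ⟨h2, hn⟩ := isDrazin_iff_isNilpotent.1 h
  refine isDrazin_iff_isNilpotent.2 ⟨by linear_combination a ^ n * h2, .of_pow (m := n + 1) ?_⟩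
  rwa [mul_pow, ← mul_assoc, ← pow_succ',
    (isIdempotentElem_mul_of_mul_sq_eq h2).one_sub.pow_succ_eq]

end CommRing

section Ring

variable {R : Type*} [Ring R] {a b c x : R}

theorem IsDrazin.isIdempotentElem_mul (h : IsDrazin a x) : IsIdempotentElem (a * x) := by
  obtain ⟨_, -, h2, h3⟩ := h
  unfold IsIdempotentElem
  rw [(Commute.symm h3).mul_mul_mul_comm, mul_assoc, ← sq, h2]

theorem IsDrazin.commute_of_commute (h : IsDrazin a x) (hc : Commute c a) : Commute c x := by
  have hq := h.isIdempotentElem_mul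
  obtain ⟨k, h1, h2, h3⟩ := h
  have hax : Commute a x := h3
  have hqx : a * x * x = x := by rw [mul_assoc, ← sq, h2]
  have hxq : x * (a * x) = x := by rw [← mul_assoc, ← h3, hqx]
  have hpow (n : ℕ) : a ^ (n + 1) * x ^ (n + 1) = a * x := by
    rw [← hax.mul_pow, hq.pow_succ_eq]
  have hpow' (n : ℕ) : x ^ (n + 1) * a ^ (n + 1) = a * x := by
    rw [← (hax.pow_pow _ _).eq, hpow]
  have hk : x * a ^ (k + 1 + 1) = a ^ (k + 1) := by rw [pow_succ, ← mul_assoc, h1, ← pow_succ]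
  have hk' : a ^ (k + 1 + 1) * x = a ^ (k + 1) := by rw [(hax.pow_left _).eq, hk]
  have hxc : x * c = a * x * c * x := calc
    x * c = x * (a * x) * c := by rw [hxq]
    _ = x ^ (k + 1 + 1) * (c * a ^ (k + 1)) := by
      rw [← hpow' k, ← mul_assoc, ← pow_succ', mul_assoc, (hc.pow_right _).eq]
    _ = x ^ (k + 1 + 1) * a ^ (k + 1 + 1) * c * x := by
      rw [← hk', ← mul_assoc c, (hc.pow_right _).eq]; simp only [mul_assoc]
    _ = a * x * c * x := by rw [hpow']
  have hcx : c * x = x * c * (a * x) := calc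
    c * x = c * (a * x * x) := by rw [hqx]
    _ = a ^ (k + 1) * c * x ^ (k + 1 + 1) := by
      rw [← hpow k, mul_assoc, ← pow_succ, ← mul_assoc, (hc.pow_right _).eq]
    _ = x * c * (a ^ (k + 1 + 1) * x ^ (k + 1 + 1)) := by
      rw [← hk, mul_assoc x, ← (hc.pow_right _).eq]; simp only [mul_assoc]
    _ = x * c * (a * x) := by rw [hpow]
  calc c * x = x * c * (a * x) := hcx
    _ = a * x * c * x := by
      rw [mul_assoc x c, ← mul_assoc c, hc.eq, ← mul_assoc, ← mul_assoc, ← h3]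
    _ = x * c := hxc.symm

theorem IsDrazin.mem_centralizer_centralizer {S : Set R} (h : IsDrazin a x)
    (ha : a ∈ S.centralizer.centralizer) : x ∈ S.centralizer.centralizer :=
  fun c hc => (h.commute_of_commute (ha c hc)).eq

@[norm_cast]
theorem Subring.isDrazin_coe {B : Subring R} {x y : B} : IsDrazin (x : R) y ↔ IsDrazin x y := by
  simp [IsDrazin, Subtype.ext_iff]

theorem Commute.exists_isMulCommutative_subring_isDrazin_mem (h : Commute a b) :
    ∃ B : Subring R, IsMulCommutative B ∧ a ∈ B ∧ b ∈ B ∧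
      ∀ ⦃x y : R⦄, IsDrazin x y → x ∈ B → y ∈ B := by
  refine ⟨Subring.centralizer (Set.centralizer {a, b}), .of_setLike_mul_comm ?_,
    Set.subset_centralizer_centralizer (by simp), Set.subset_centralizer_centralizer (by simp),
    fun x y hxy hx => hxy.mem_centralizer_centralizer hx⟩
  refine Set.centralizer_centralizer_comm_of_comm ?_
  rintro _ (rfl | rfl) _ (rfl | rfl) <;> first | rfl | exact h.eq | exact h.eq.symm

theorem IsGroupInv.isDrazin (h : IsGroupInv a x) : IsDrazin a x := by
  obtain ⟨h1, h2, h3⟩ := h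
  refine ⟨1, ?_, ?_, h3⟩
  · rw [pow_one, pow_succ, pow_one, ← mul_assoc, ← h3, h1]
  · rw [sq, ← mul_assoc, h3, h2]

theorem IsDrazin.exists_isGroupInv_pow (h : IsDrazin a x) :
    ∃ n, 1 ≤ n ∧ IsGroupInv (a ^ n) (x ^ n) ∧ a ^ n * x ^ n = a * x := by
  have hq := h.isIdempotentElem_mul
  obtain ⟨k, h1, h2, h3⟩ := h
  have hax : Commute a x := h3
  have hgx : a ^ (k + 1) * x ^ (k + 1) = a * x := by rw [← hax.mul_pow, hq.pow_succ_eq]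
  refine ⟨k + 1, k.succ_pos, ⟨?_, ?_, (hax.pow_pow _ _).eq⟩, hgx⟩
  · rw [hgx, mul_assoc, h1, ← pow_succ']
  · rw [← (hax.pow_pow _ _).eq, hgx, pow_succ' x k, ← mul_assoc, mul_assoc a, ← sq, h2]

end Ring

section StarRing

variable {R : Type*} [Ring R] [StarRing R] {a b d x : R}

theorem IsGroupInv.isMP_s5 (h : IsGroupInv a x) (hs : IsSelfAdjoint (a * x)) : IsMP a x :=
  ⟨h.1, h.2.1, hs.star_eq, h.2.2 ▸ hs.star_eq⟩

theorem isStarDMP_iff : IsStarDMP a ↔ ∃ x, IsDrazin a x ∧ IsSelfAdjoint (a * x) := by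
  constructor
  · rintro ⟨_ | m, hn, x, hmp, hg⟩
    · omega
    obtain ⟨B, _, ha, -, hB⟩ := (Commute.refl a).exists_isMulCommutative_subring_isDrazin_mem
    lift x to B using hB hg.isDrazin (pow_mem ha _)
    lift a to B using ha
    have hx : IsDrazin (a ^ (m + 1)) x := by exact_mod_cast hg.isDrazin
    refine ⟨↑(a ^ m * x), by exact_mod_cast hx.pow_mul_of_pow_succ, ?_⟩
    push_cast
    rw [← mul_assoc, ← pow_succ']
    exact hmp.2.2.1
  · rintro ⟨x, hx, hs⟩
    obtain ⟨n, hn, hg, hgx⟩ := hx.exists_isGroupInv_pow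
    exact ⟨n, hn, x ^ n, hg.isMP_s5 (hgx ▸ hs), hg⟩

theorem IsStarDMP.isSelfAdjoint_mul (ha : IsStarDMP a) (hx : IsDrazin a x) :
    IsSelfAdjoint (a * x) := by
  obtain ⟨y, hy, hs⟩ := isStarDMP_iff.1 ha
  obtain ⟨B, _, ha, -, hB⟩ := (Commute.refl a).exists_isMulCommutative_subring_isDrazin_mem
  lift x to B using hB hx ha
  lift y to B using hB hy ha
  lift a to B using ha
  norm_cast at hx hy
  rwa [hx.unique hy]

theorem Subring.isSelfAdjoint_coe_mul_add_mul_one_sub {B : Subring R} [IsMulCommutative B]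
    {p u v : B} (hp : IsSelfAdjoint (p : R)) (hu : IsSelfAdjoint (u : R))
    (hv : IsSelfAdjoint (v : R)) : IsSelfAdjoint ((u * p + v * (1 - p) : B) : R) := by
  have hc (y z : B) : Commute (y : R) z := (Commute.all y z).map B.subtype
  have hp' : IsSelfAdjoint ((1 - p : B) : R) := by push_cast; exact (IsSelfAdjoint.one _).sub hp
  push_cast
  exact ((hu.commute_iff hp).1 (hc u p)).add ((hv.commute_iff hp').1 (hc v (1 - p)))

theorem IsStarDMP.one_add_mul_of_add (hab : Commute a b) (hd : IsDrazin a d)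
    (hp : IsSelfAdjoint (a * d)) (h : IsStarDMP (a + b)) : IsStarDMP (1 + d * b) := by
  obtain ⟨s, hs, hr⟩ := isStarDMP_iff.1 h
  obtain ⟨B, _, ha, hb, hB⟩ := hab.exists_isMulCommutative_subring_isDrazin_mem
  lift d to B using hB hd ha
  lift s to B using hB hs (add_mem ha hb)
  lift a to B using ha
  lift b to B using hb
  norm_cast at hd hs hp hr
  obtain ⟨t, ht, hct⟩ := hd.exists_isDrazin_one_add_mul hs
  refine isStarDMP_iff.2 ⟨t, by exact_mod_cast ht, ?_⟩
  norm_cast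
  rw [hct, ← one_mul (1 - a * d)]
  exact Subring.isSelfAdjoint_coe_mul_add_mul_one_sub hp hr (.one _)

theorem IsStarDMP.add_of_one_add_mul (hab : Commute a b) (hd : IsDrazin a d) (hp : IsSelfAdjoint (a * d))
    (hb : IsStarDMP b) (h : IsStarDMP (1 + d * b)) : IsStarDMP (a + b) := by
  obtain ⟨e, he, hq⟩ := isStarDMP_iff.1 hb
  obtain ⟨t, ht, hr⟩ := isStarDMP_iff.1 h
  obtain ⟨B, _, ha, hb, hB⟩ := hab.exists_isMulCommutative_subring_isDrazin_mem
  lift d to B using hB hd ha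
  lift e to B using hB he hb
  lift t to B using hB ht (add_mem (one_mem _) (mul_mem d.2 hb))
  lift a to B using ha
  lift b to B using hb
  norm_cast at hd he ht hp hq hr
  obtain ⟨y, hy, hxy⟩ := hd.exists_isDrazin_add he ht
  refine isStarDMP_iff.2 ⟨y, by exact_mod_cast hy, ?_⟩
  norm_cast
  rw [hxy]
  exact Subring.isSelfAdjoint_coe_mul_add_mul_one_sub hp hr hq

end StarRing

variable {A : Type*} [NormedRing A] [StarRing A] [NormedAlgebra ℂ A] [CompleteSpace A]

theorem stmt5_general (a b aD : A) (ha : IsStarDMP a) (hb : IsStarDMP b)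
    (haD : IsDrazin a aD)
    (hab : a * b = b * a) :
    IsStarDMP (a + b) ↔ IsStarDMP (1 + aD * b) := by
  have hp := ha.isSelfAdjoint_mul haD
  exact ⟨IsStarDMP.one_add_mul_of_add hab haD hp, IsStarDMP.add_of_one_add_mul hab haD hp hb⟩

theorem stmt5 (a b aD : A) (ha : IsStarDMP a) (hb : IsStarDMP b)
    (haD : IsDrazin a aD)
    (hab : a * b = b * a) (hsb : star a * b = b * star a) :
    IsStarDMP (a + b) ↔ IsStarDMP (1 + aD * b) :=
  stmt5_general a b aD ha hb haD hab
end

section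
/- Let B, C ∈ ℂ^{n×n} be such that BC and CB are *-DMP (as elements of the Banach *-algebra ℂ^{n×n} with conjugate transpose involution). Then the block matrix Q = [[0, B], [C, 0]] ∈ ℂ^{2n×2n} is *-DMP. -/
/-! If `x` is a common Moore–Penrose and group inverse of `a`, then `a * x = x * a` is a
self-adjoint idempotent, and as `a` and `x` commute, `a ^ k * x ^ k = (a * x) ^ k = a * x`;
so `x ^ k` is a common inverse of `a ^ k`. Two *-DMP elements therefore have EP powers with a
common exponent, which makes the block diagonal `fromBlocks (B * C) 0 0 (C * B)` *-DMP, and this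
is the square of `fromBlocks 0 B C 0`. -/

section Ring

variable {R : Type*} [Ring R] [StarRing R] {a : R}

theorem IsEP.pow (h : IsEP a) {k : ℕ} (hk : 1 ≤ k) : IsEP (a ^ k) := by
  obtain ⟨x, ⟨hax, hxa, hstar, -⟩, -, -, hcomm⟩ := h
  have hidem : IsIdempotentElem (a * x) := by rw [IsIdempotentElem, ← mul_assoc, hax]
  obtain ⟨j, rfl⟩ : ∃ j, k = j + 1 := ⟨k - 1, by omega⟩
  have hright : a ^ (j + 1) * x ^ (j + 1) = a * x := by
    rw [← Commute.mul_pow hcomm, hidem.pow_succ_eq]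
  have hleft : x ^ (j + 1) * a ^ (j + 1) = a * x := by
    rw [← Commute.mul_pow hcomm.symm, ← hcomm, hidem.pow_succ_eq]
  have h1 : a ^ (j + 1) * x ^ (j + 1) * a ^ (j + 1) = a ^ (j + 1) := by
    rw [hright, pow_succ', ← mul_assoc, hax]
  have h2 : x ^ (j + 1) * a ^ (j + 1) * x ^ (j + 1) = x ^ (j + 1) := by
    rw [hleft, hcomm, pow_succ', ← mul_assoc, hxa]
  exact ⟨x ^ (j + 1), ⟨h1, h2, by rw [hright, hstar], by rw [hleft, hstar]⟩, h1, h2,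
    by rw [hright, hleft]⟩

theorem IsStarDMP.of_pow {m : ℕ} (hm : 1 ≤ m) (h : IsStarDMP (a ^ m)) : IsStarDMP a := by
  obtain ⟨k, hk, hEP⟩ := h
  exact ⟨m * k, Nat.one_le_iff_ne_zero.mpr (by positivity), by rwa [pow_mul]⟩

theorem IsStarDMP.exists_common_pow {S : Type*} [Ring S] [StarRing S] {b : S}
    (ha : IsStarDMP a) (hb : IsStarDMP b) : ∃ k, 1 ≤ k ∧ IsEP (a ^ k) ∧ IsEP (b ^ k) := by
  obtain ⟨k, hk, hEPa⟩ := ha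
  obtain ⟨l, hl, hEPb⟩ := hb
  refine ⟨k * l, Nat.one_le_iff_ne_zero.mpr (by positivity), ?_, ?_⟩
  · rw [pow_mul]; exact IsEP.pow hEPa hl
  · rw [pow_mul']; exact IsEP.pow hEPb hk

end Ring

namespace Matrix

variable {m n R : Type*}

theorem star_fromBlocks_diag [AddMonoid R] [StarAddMonoid R] (P : Matrix m m R)
    (Q : Matrix n n R) : star (fromBlocks P 0 0 Q) = fromBlocks (star P) 0 0 (star Q) := by
  simp [star_eq_conjTranspose, fromBlocks_conjTranspose]

variable [Fintype m] [Fintype n] [DecidableEq m] [DecidableEq n]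

theorem isEP_fromBlocks_diag [Ring R] [StarRing R] {M : Matrix m m R} {N : Matrix n n R}
    (hM : IsEP M) (hN : IsEP N) : IsEP (fromBlocks M 0 0 N) := by
  obtain ⟨X, ⟨hM1, hM2, hM3, hM4⟩, -, -, hM5⟩ := hM
  obtain ⟨Y, ⟨hN1, hN2, hN3, hN4⟩, -, -, hN5⟩ := hN
  have h1 : fromBlocks M 0 0 N * fromBlocks X 0 0 Y * fromBlocks M 0 0 N =
      fromBlocks M 0 0 N := by
    simp [fromBlocks_multiply, hM1, hN1]
  have h2 : fromBlocks X 0 0 Y * fromBlocks M 0 0 N * fromBlocks X 0 0 Y =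
      fromBlocks X 0 0 Y := by
    simp [fromBlocks_multiply, hM2, hN2]
  refine ⟨fromBlocks X 0 0 Y, ⟨h1, h2, ?_, ?_⟩, h1, h2, ?_⟩
  · simp only [fromBlocks_multiply, Matrix.mul_zero, Matrix.zero_mul, add_zero, zero_add,
      star_fromBlocks_diag, hM3, hN3]
  · simp only [fromBlocks_multiply, Matrix.mul_zero, Matrix.zero_mul, add_zero, zero_add,
      star_fromBlocks_diag, hM4, hN4]
  · simp [fromBlocks_multiply, hM5, hN5]

theorem isStarDMP_fromBlocks_diag [Ring R] [StarRing R] {M : Matrix m m R} {N : Matrix n n R}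
    (hM : IsStarDMP M) (hN : IsStarDMP N) : IsStarDMP (fromBlocks M 0 0 N) := by
  obtain ⟨k, hk, hMk, hNk⟩ := hM.exists_common_pow hN
  exact ⟨k, hk, by rw [fromBlocks_diagonal_pow]; exact isEP_fromBlocks_diag hMk hNk⟩

theorem fromBlocks_antidiag_sq [Semiring R] (B : Matrix m n R) (C : Matrix n m R) :
    fromBlocks 0 B C 0 ^ 2 = fromBlocks (B * C) 0 0 (C * B) := by
  simp [sq, fromBlocks_multiply]

end Matrix

variable {A : Type*} [NormedRing A] [StarRing A] [NormedAlgebra ℂ A] [CompleteSpace A]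

theorem stmt11 {n : ℕ} (B C : Matrix (Fin n) (Fin n) ℂ)
    (hBC : IsStarDMP (B * C)) (hCB : IsStarDMP (C * B)) :
    IsStarDMP (Matrix.fromBlocks 0 B C 0) :=
  IsStarDMP.of_pow one_le_two <| by
    rw [Matrix.fromBlocks_antidiag_sq]
    exact Matrix.isStarDMP_fromBlocks_diag hBC hCB
end
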